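/- Miranda's theorem in dimension 2: let W = (W₁, W₂) : [r,R] × [r,R] → ℝ² be continuous with W₁(r,β) > 0 and W₁(R,β) < 0 for all β ∈ [r,R], and W₂(α,r) > 0 and W₂(α,R) < 0 for all α ∈ [r,R]. Then there exists (α₀,β₀) ∈ [r,R] × [r,R] with W(α₀,β₀) = (0,0). -/

import Mathlib

/-!
Label the points of a fine square grid in `[r, R]²` by `0` where `W₁ > 0`, by `1` where
`W₁ ≤ 0 < W₂`, and by `2` elsewhere. Call a grid edge with labels `{0, 1}` a door, counted with
sign `±1` according to its direction. The boundary conditions make the signed number of doors met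
along the boundary of the square equal to `1`; this number is the sum of the same counts around
the small cells, so some cell has a nonzero count, and such a cell must carry all three labels.
By uniform continuity its corner labelled `1` is an approximate common zero of `W₁` and `W₂`,
and compactness turns approximate common zeros into an exact one.
-/

open Set

def doorSign (a b : ℕ) : ℤ :=
  if a = 0 ∧ b = 1 then 1 else if a = 1 ∧ b = 0 then -1 else 0

lemma doorSign_eq_zero_of_ne_zero {a b : ℕ} (ha : a ≠ 0) (hb : b ≠ 0) : doorSign a b = 0 := by
  simp [doorSign, ha, hb]

lemma doorSign_eq_zero_of_ne_one {a b : ℕ} (ha : a ≠ 1) (hb : b ≠ 1) : doorSign a b = 0 := by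
  simp [doorSign, ha, hb]

-- On the labels `0, 1` the door sign is a difference, so it sums to zero around a closed loop.
lemma doorSign_of_le_one {a b : ℕ} (ha : a ≤ 1) (hb : b ≤ 1) : doorSign a b = b - a := by
  interval_cases a <;> interval_cases b <;> rfl

section Grid

variable (ℓ : ℕ × ℕ → ℕ)

def horizDoor (i j : ℕ) : ℤ := doorSign (ℓ (i, j)) (ℓ (i + 1, j))

def vertDoor (i j : ℕ) : ℤ := doorSign (ℓ (i, j)) (ℓ (i, j + 1))

/-- The signed door count along the boundary of the cell `[i, i + 1] × [j, j + 1]`,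
traversed counterclockwise. -/
def cellCirculation (i j : ℕ) : ℤ :=
  horizDoor ℓ i j + vertDoor ℓ (i + 1) j - horizDoor ℓ i (j + 1) - vertDoor ℓ i j

lemma sum_cellCirculation (m n : ℕ) :
    ∑ i ∈ Finset.range m, ∑ j ∈ Finset.range n, cellCirculation ℓ i j =
      ∑ i ∈ Finset.range m, (horizDoor ℓ i 0 - horizDoor ℓ i n) +
        ∑ j ∈ Finset.range n, (vertDoor ℓ m j - vertDoor ℓ 0 j) := by
  have hsplit : ∀ i j, cellCirculation ℓ i j =
      (horizDoor ℓ i j - horizDoor ℓ i (j + 1)) + (vertDoor ℓ (i + 1) j - vertDoor ℓ i j) := by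
    intro i j; rw [cellCirculation]; ring
  simp only [hsplit, Finset.sum_add_distrib, Finset.sum_range_sub']
  rw [Finset.sum_comm]
  exact congrArg _ (Finset.sum_congr rfl fun j _ => Finset.sum_range_sub (vertDoor ℓ · j) m)

variable {ℓ}

lemma exists_labels_of_cellCirculation_ne_zero {i j : ℕ} (h : cellCirculation ℓ i j ≠ 0) :
    (∃ a ∈ Icc i (i + 1) ×ˢ Icc j (j + 1), ℓ a = 0) ∧
      (∃ b ∈ Icc i (i + 1) ×ˢ Icc j (j + 1), ℓ b = 1) ∧
      ∃ c ∈ Icc i (i + 1) ×ˢ Icc j (j + 1), 1 < ℓ c := by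
  have c00 : (i, j) ∈ Icc i (i + 1) ×ˢ Icc j (j + 1) := by simp
  have c10 : (i + 1, j) ∈ Icc i (i + 1) ×ˢ Icc j (j + 1) := by simp
  have c01 : (i, j + 1) ∈ Icc i (i + 1) ×ˢ Icc j (j + 1) := by simp
  have c11 : (i + 1, j + 1) ∈ Icc i (i + 1) ×ˢ Icc j (j + 1) := by simp
  refine ⟨?_, ?_, ?_⟩ <;> by_contra! hne <;> apply h <;>
    have h00 := hne _ c00 <;> have h10 := hne _ c10 <;> have h01 := hne _ c01 <;>
    have h11 := hne _ c11
  · simp only [cellCirculation, horizDoor, vertDoor, doorSign_eq_zero_of_ne_zero h00 h10,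
      doorSign_eq_zero_of_ne_zero h10 h11, doorSign_eq_zero_of_ne_zero h01 h11,
      doorSign_eq_zero_of_ne_zero h00 h01, sub_zero, add_zero]
  · simp only [cellCirculation, horizDoor, vertDoor, doorSign_eq_zero_of_ne_one h00 h10,
      doorSign_eq_zero_of_ne_one h10 h11, doorSign_eq_zero_of_ne_one h01 h11,
      doorSign_eq_zero_of_ne_one h00 h01, sub_zero, add_zero]
  · simp only [cellCirculation, horizDoor, vertDoor, doorSign_of_le_one h00 h10,
      doorSign_of_le_one h10 h11, doorSign_of_le_one h01 h11, doorSign_of_le_one h00 h01]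
    ring

lemma sum_cellCirculation_eq_one {m n : ℕ}
    (hleft : ∀ j ≤ n, ℓ (0, j) = 0) (hright : ∀ j ≤ n, ℓ (m, j) ≠ 0)
    (hbot : ∀ i ≤ m, ℓ (i, 0) ≤ 1) (htop : ∀ i ≤ m, ℓ (i, n) ≠ 1) :
    ∑ i ∈ Finset.range m, ∑ j ∈ Finset.range n, cellCirculation ℓ i j = 1 := by
  have hbot' : ∀ i ∈ Finset.range m, horizDoor ℓ i 0 - horizDoor ℓ i n = ℓ (i + 1, 0) - ℓ (i, 0) := by
    intro i hi
    have hi := Finset.mem_range.1 hi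
    rw [horizDoor, horizDoor, doorSign_of_le_one (hbot i hi.le) (hbot (i + 1) hi),
      doorSign_eq_zero_of_ne_one (htop i hi.le) (htop (i + 1) hi), sub_zero]
  have hside : ∀ j ∈ Finset.range n, vertDoor ℓ m j - vertDoor ℓ 0 j = 0 := by
    intro j hj
    have hj := Finset.mem_range.1 hj
    rw [vertDoor, vertDoor, doorSign_eq_zero_of_ne_zero (hright j hj.le) (hright (j + 1) hj),
      hleft j hj.le, hleft (j + 1) hj]
    rfl
  have hm : ℓ (m, 0) = 1 := by have := hbot m le_rfl; have := hright 0 (Nat.zero_le n); omega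
  rw [sum_cellCirculation, Finset.sum_congr rfl hbot', Finset.sum_congr rfl hside,
    Finset.sum_range_sub (fun i => (ℓ (i, 0) : ℤ)), hm, hleft 0 (Nat.zero_le n)]
  simp

theorem exists_cell_with_all_labels {m n : ℕ}
    (hleft : ∀ j ≤ n, ℓ (0, j) = 0) (hright : ∀ j ≤ n, ℓ (m, j) ≠ 0)
    (hbot : ∀ i ≤ m, ℓ (i, 0) ≤ 1) (htop : ∀ i ≤ m, ℓ (i, n) ≠ 1) :
    ∃ i < m, ∃ j < n,
      (∃ a ∈ Icc i (i + 1) ×ˢ Icc j (j + 1), ℓ a = 0) ∧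
      (∃ b ∈ Icc i (i + 1) ×ˢ Icc j (j + 1), ℓ b = 1) ∧
      ∃ c ∈ Icc i (i + 1) ×ˢ Icc j (j + 1), 1 < ℓ c := by
  have hsum := sum_cellCirculation_eq_one hleft hright hbot htop
  obtain ⟨i, hi, hrow⟩ := Finset.exists_ne_zero_of_sum_ne_zero (hsum ▸ one_ne_zero)
  obtain ⟨j, hj, hcell⟩ := Finset.exists_ne_zero_of_sum_ne_zero hrow
  exact ⟨i, Finset.mem_range.1 hi, j, Finset.mem_range.1 hj,
    exists_labels_of_cellCirculation_ne_zero hcell⟩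

end Grid

noncomputable def mirandaLabel {X : Type*} (f g : X → ℝ) (p : X) : ℕ :=
  if 0 < f p then 0 else if 0 < g p then 1 else 2

section Label

variable {X : Type*} {f g : X → ℝ} {p : X}

lemma mirandaLabel_eq_zero : mirandaLabel f g p = 0 ↔ 0 < f p := by
  unfold mirandaLabel; split_ifs <;> simp_all

lemma mirandaLabel_eq_one : mirandaLabel f g p = 1 ↔ f p ≤ 0 ∧ 0 < g p := by
  unfold mirandaLabel; split_ifs <;> simp_all

lemma one_lt_mirandaLabel : 1 < mirandaLabel f g p ↔ f p ≤ 0 ∧ g p ≤ 0 := by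
  unfold mirandaLabel; split_ifs <;> simp_all

end Label

lemma dist_grid_le {s : ℝ} (hs : 0 ≤ s) (r : ℝ) {i u v : ℕ} (hu : u ∈ Icc i (i + 1))
    (hv : v ∈ Icc i (i + 1)) : dist (r + u * s) (r + v * s) ≤ s := by
  have huv : |(u : ℝ) - v| ≤ 1 := by
    obtain ⟨⟨hu₁, hu₂⟩, ⟨hv₁, hv₂⟩⟩ := And.intro hu hv
    have h₁ : (u : ℝ) ≤ v + 1 := by exact_mod_cast (show u ≤ v + 1 by omega)
    have h₂ : (v : ℝ) ≤ u + 1 := by exact_mod_cast (show v ≤ u + 1 by omega)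
    exact abs_sub_le_iff.2 ⟨by linarith, by linarith⟩
  rw [Real.dist_eq, add_sub_add_left_eq_sub, ← sub_mul, abs_mul, abs_of_nonneg hs]
  exact mul_le_of_le_one_left hs huv

lemma exists_grid_step {r R δ : ℝ} (hrR : r ≤ R) (hδ : 0 < δ) :
    ∃ (n : ℕ) (s : ℝ), 0 ≤ s ∧ s < δ ∧ r + n * s = R := by
  obtain ⟨n, hn⟩ := exists_nat_gt ((R - r) / δ)
  have hn₀ : (0 : ℝ) < n := (div_nonneg (sub_nonneg.2 hrR) hδ.le).trans_lt hn
  refine ⟨n, (R - r) / n, div_nonneg (sub_nonneg.2 hrR) hn₀.le, ?_, ?_⟩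
  · rw [div_lt_iff₀ hn₀]
    rwa [div_lt_iff₀ hδ, mul_comm] at hn
  · field_simp
    ring

lemma IsCompact.exists_eq_of_forall_exists_dist_lt {X Y : Type*} [TopologicalSpace X]
    [MetricSpace Y] {K : Set X} {f : X → Y} {y : Y} (hK : IsCompact K) (hf : ContinuousOn f K)
    (h : ∀ ε > 0, ∃ x ∈ K, dist (f x) y < ε) : ∃ x ∈ K, f x = y := by
  have hy : y ∈ closure (f '' K) :=
    Metric.mem_closure_iff.2 fun ε hε =>
      let ⟨x, hx, hxy⟩ := h ε hε
      ⟨f x, mem_image_of_mem f hx, by rwa [dist_comm]⟩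
  rwa [(hK.image_of_continuousOn hf).isClosed.closure_eq] at hy

lemma exists_approx_common_zero {r R : ℝ} {W₁ W₂ : ℝ × ℝ → ℝ} (hrR : r ≤ R)
    (hW₁ : ContinuousOn W₁ (Icc r R ×ˢ Icc r R))
    (hW₂ : ContinuousOn W₂ (Icc r R ×ˢ Icc r R))
    (h1r : ∀ β ∈ Icc r R, 0 < W₁ (r, β))
    (h1R : ∀ β ∈ Icc r R, W₁ (R, β) < 0)
    (h2r : ∀ α ∈ Icc r R, 0 < W₂ (α, r))
    (h2R : ∀ α ∈ Icc r R, W₂ (α, R) < 0) {ε : ℝ} (hε : 0 < ε) :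
    ∃ p ∈ Icc r R ×ˢ Icc r R, |W₁ p| < ε ∧ |W₂ p| < ε := by
  obtain ⟨δ, hδ, hW⟩ := Metric.uniformContinuousOn_iff.1
    ((isCompact_Icc.prod isCompact_Icc).uniformContinuousOn_of_continuous (hW₁.prodMk hW₂)) ε hε
  obtain ⟨n, s, hs, hsδ, hns⟩ := exists_grid_step hrR hδ
  set x : ℕ → ℝ := fun u => r + u * s
  have hx₀ : x 0 = r := by simp [x]
  have hxn : x n = R := hns
  have hx : ∀ u ≤ n, x u ∈ Icc r R := fun u hu =>
    ⟨le_add_of_nonneg_right (by positivity), by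
      rw [← hxn]
      exact add_le_add_right (mul_le_mul_of_nonneg_right (Nat.cast_le.2 hu) hs) r⟩
  set ℓ : ℕ × ℕ → ℕ := fun p => mirandaLabel W₁ W₂ (x p.1, x p.2)
  obtain ⟨i, hi, j, hj, ⟨a, ha, ha₀⟩, ⟨b, hb, hb₁⟩, ⟨c, hc, hc₂⟩⟩ :=
    exists_cell_with_all_labels (ℓ := ℓ) (m := n) (n := n)
      (fun j hj => mirandaLabel_eq_zero.2 (hx₀ ▸ h1r _ (hx j hj)))
      (fun j hj h => (h1R _ (hx j hj)).not_gt (hxn ▸ mirandaLabel_eq_zero.1 h))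
      (fun i hi => not_lt.1 fun h => (one_lt_mirandaLabel.1 h).2.not_gt (hx₀ ▸ h2r _ (hx i hi)))
      (fun i hi h => (h2R _ (hx i hi)).not_gt (hxn ▸ (mirandaLabel_eq_one.1 h).2))
  have hmem : ∀ p ∈ Icc i (i + 1) ×ˢ Icc j (j + 1), (x p.1, x p.2) ∈ Icc r R ×ˢ Icc r R :=
    fun p hp => ⟨hx _ (hp.1.2.trans hi), hx _ (hp.2.2.trans hj)⟩
  have hclose : ∀ p ∈ Icc i (i + 1) ×ˢ Icc j (j + 1), ∀ q ∈ Icc i (i + 1) ×ˢ Icc j (j + 1),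
      dist (W₁ (x p.1, x p.2)) (W₁ (x q.1, x q.2)) < ε ∧
        dist (W₂ (x p.1, x p.2)) (W₂ (x q.1, x q.2)) < ε := fun p hp q hq => by
    have hpq : dist (x p.1, x p.2) (x q.1, x q.2) < δ :=
      (max_le (dist_grid_le hs r hp.1 hq.1) (dist_grid_le hs r hp.2 hq.2)).trans_lt hsδ
    simpa only [Prod.dist_eq, max_lt_iff] using hW _ (hmem p hp) _ (hmem q hq) hpq
  have hab := (hclose a ha b hb).1
  have hbc := (hclose b hb c hc).2
  rw [mirandaLabel_eq_zero] at ha₀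
  rw [mirandaLabel_eq_one] at hb₁
  rw [one_lt_mirandaLabel] at hc₂
  rw [Real.dist_eq, abs_lt] at hab hbc
  exact ⟨_, hmem b hb, abs_lt.2 ⟨by linarith, by linarith⟩, abs_lt.2 ⟨by linarith, by linarith⟩⟩

theorem stmt_3_general (r R : ℝ) (hrR : r < R)
    (W₁ W₂ : ℝ × ℝ → ℝ)
    (hW₁ : ContinuousOn W₁ (Icc r R ×ˢ Icc r R))
    (hW₂ : ContinuousOn W₂ (Icc r R ×ˢ Icc r R))
    (h1r : ∀ β ∈ Icc r R, 0 < W₁ (r, β))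
    (h1R : ∀ β ∈ Icc r R, W₁ (R, β) < 0)
    (h2r : ∀ α ∈ Icc r R, 0 < W₂ (α, r))
    (h2R : ∀ α ∈ Icc r R, W₂ (α, R) < 0) :
    ∃ p ∈ Icc r R ×ˢ Icc r R, W₁ p = 0 ∧ W₂ p = 0 := by
  obtain ⟨p, hp, hWp⟩ := (isCompact_Icc.prod isCompact_Icc).exists_eq_of_forall_exists_dist_lt
    (hW₁.prodMk hW₂) (y := 0) fun ε hε => by
      obtain ⟨p, hp, h₁, h₂⟩ := exists_approx_common_zero hrR.le hW₁ hW₂ h1r h1R h2r h2R hε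
      exact ⟨p, hp, by simpa [Prod.dist_eq] using And.intro h₁ h₂⟩
  exact ⟨p, hp, congrArg Prod.fst hWp, congrArg Prod.snd hWp⟩

theorem stmt_3 (r R : ℝ) (hr : 0 < r) (hrR : r < R)
    (W₁ W₂ : ℝ × ℝ → ℝ)
    (hW₁ : ContinuousOn W₁ (Icc r R ×ˢ Icc r R))
    (hW₂ : ContinuousOn W₂ (Icc r R ×ˢ Icc r R))
    (h1r : ∀ β ∈ Icc r R, 0 < W₁ (r, β))
    (h1R : ∀ β ∈ Icc r R, W₁ (R, β) < 0)
    (h2r : ∀ α ∈ Icc r R, 0 < W₂ (α, r))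
    (h2R : ∀ α ∈ Icc r R, W₂ (α, R) < 0) :
    ∃ p ∈ Icc r R ×ˢ Icc r R, W₁ p = 0 ∧ W₂ p = 0 :=
  stmt_3_general r R hrR W₁ W₂ hW₁ hW₂ h1r h1R h2r h2R
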